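/- Suppose the line ℓ meets the circle C in two distinct points a and b, and let p, q, r, s ∈ ℓ be points not on C. Then cr(a,b;p,q) = cr(a,b;s,r) holds if and only if I_q ∘ I_p = I_r ∘ I_s as maps C → C. -/

import Mathlib

open Metric
open scoped RealInnerProductSpace

/-- The Euclidean plane. -/
abbrev E2 : Type := EuclideanSpace ℝ (Fin 2)

/-- `I` restricts on the circle `sphere o ρ` to the chord map through `p`:
for every `x` on the circle, `I x` is the point of the circle on the line through `x` and `p`
such that every point of the circle on that line equals `x` or `I x`. -/
def ChordMap (o : E2) (ρ : ℝ) (p : E2) (I : E2 → E2) : Prop :=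
  ∀ x ∈ sphere o ρ, I x ∈ sphere o ρ ∧
    I x ∈ affineSpan ℝ ({x, p} : Set E2) ∧
    ∀ z ∈ sphere o ρ, z ∈ affineSpan ℝ ({x, p} : Set E2) → z = x ∨ z = I x

/-- The cross-ratio of four collinear points, in terms of their coordinates with respect to
an affine parametrization of their common line. -/
noncomputable def crossRatio (ta tb tc td : ℝ) : ℝ :=
  ((ta - tc) / (tb - tc)) * ((tb - td) / (ta - td))

private lemma inner_coords (x y : E2) : ⟪x, y⟫ = x 0 * y 0 + x 1 * y 1 := by
  simp [PiLp.inner_apply, RCLike.inner_apply, conj_trivial, Fin.sum_univ_two]; ring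

private lemma sq_add_sq_ne_zero {W Z : ℝ} (hZ : Z ≠ 0) : W^2 + Z^2 ≠ 0 := by
  have h1 : 0 < Z^2 := by positivity
  nlinarith [sq_nonneg W]

private lemma cr_affine (c t0 w x y z : ℝ) (hc : c ≠ 0) :
    crossRatio (c*(w-t0)) (c*(x-t0)) (c*(y-t0)) (c*(z-t0)) = crossRatio w x y z := by
  unfold crossRatio
  rw [show c*(w-t0)-(c*(y-t0)) = c*(w-y) by ring, show c*(x-t0)-(c*(y-t0)) = c*(x-y) by ring,
      show c*(x-t0)-(c*(z-t0)) = c*(x-z) by ring, show c*(w-t0)-(c*(z-t0)) = c*(w-z) by ring,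
      mul_div_mul_left _ _ hc, mul_div_mul_left _ _ hc]

private lemma key_step (β ν E X Y Xy Yy : ℝ) (hcirc : X^2+Y^2 = β*X+2*ν*Y) (hY : Y ≠ 0)
    (hE0 : E ≠ 0) (hEβ : E ≠ β)
    (hXy : Xy * ((E-X)^2+Y^2) =
      X*((E-X)^2+Y^2) + (β*(E+X)+2*ν*Y-2*E*X)*(E-X))
    (hYy : Yy * ((E-X)^2+Y^2) =
      (((E-X)^2+Y^2) - (β*(E+X)+2*ν*Y-2*E*X))*Y) :
    (Xy^2+Yy^2 = β*Xy+2*ν*Yy) ∧ Yy ≠ 0 ∧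
      (Xy^2+Yy^2)*(X^2+Y^2)*(E-β) = (β^2+4*ν^2)*E*(Yy*Y) := by
  have hd0 : 0 < (E-X)^2+Y^2 := by
    have h1 : 0 < Y^2 := by positivity
    nlinarith [sq_nonneg (E-X)]
  have hd : ((E-X)^2+Y^2) ≠ 0 := ne_of_gt hd0
  have hc1 : (Xy^2+Yy^2) * ((E-X)^2+Y^2)^2 = (β*Xy+2*ν*Yy) * ((E-X)^2+Y^2)^2 := by
    linear_combination
      (Xy*((E-X)^2+Y^2) + (X*((E-X)^2+Y^2) + (β*(E+X)+2*ν*Y-2*E*X)*(E-X))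
        - β*((E-X)^2+Y^2)) * hXy
      + (Yy*((E-X)^2+Y^2) + ((((E-X)^2+Y^2) - (β*(E+X)+2*ν*Y-2*E*X))*Y)
        - 2*ν*((E-X)^2+Y^2)) * hYy
      + ((1)*Y^4 + (2)*X^2*Y^2 + (1)*X^4 + (2)*E^2*Y^2 + (-2)*E^2*X^2 + (1)*E^4 + (-4)*ν*Y^3 + (-4)*ν*X^2*Y + (8)*ν*E*X*Y + (-4)*ν*E^2*Y + (-2)*β*X*Y^2 + (-2)*β*X^3 + (-2)*β*E*Y^2 + (2)*β*E*X^2 + (2)*β*E^2*X + (-2)*β*E^3) * hcirc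
  have hcy : Xy^2+Yy^2 = β*Xy+2*ν*Yy := mul_right_cancel₀ (pow_ne_zero 2 hd) hc1
  have hc2 : ((Xy^2+Yy^2)*(X^2+Y^2)*(E-β)) * ((E-X)^2+Y^2)^2 =
      ((β^2+4*ν^2)*E*(Yy*Y)) * ((E-X)^2+Y^2)^2 := by
    linear_combination
      ((Xy*((E-X)^2+Y^2) + (X*((E-X)^2+Y^2) + (β*(E+X)+2*ν*Y-2*E*X)*(E-X)))*(X^2+Y^2)*(E-β)) * hXy
      + ((Yy*((E-X)^2+Y^2) + ((((E-X)^2+Y^2) - (β*(E+X)+2*ν*Y-2*E*X))*Y))*(X^2+Y^2)*(E-β)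
          - (β^2+4*ν^2)*E*Y*((E-X)^2+Y^2)) * hYy
      + ((1)*E*Y^6 + (3)*E*X^2*Y^4 + (3)*E*X^4*Y^2 + (1)*E*X^6 + (2)*E^3*Y^4 + (-2)*E^3*X^4 + (1)*E^5*Y^2 + (1)*E^5*X^2 + (-2)*ν*E*Y^5 + (-4)*ν*E*X^2*Y^3 + (-2)*ν*E*X^4*Y + (4)*ν*E^2*X*Y^3 + (4)*ν*E^2*X^3*Y + (-4)*ν*E^4*X*Y + (2)*ν*E^5*Y + (-4)*ν^2*E*Y^4 + (-4)*ν^2*E*X^2*Y^2 + (8)*ν^2*E^2*X*Y^2 + (-4)*ν^2*E^3*Y^2 + (-1)*β*Y^6 + (-3)*β*X^2*Y^4 + (-3)*β*X^4*Y^2 + (-1)*β*X^6 + (-1)*β*E*X*Y^4 + (-2)*β*E*X^3*Y^2 + (-1)*β*E*X^5 + (-4)*β*E^2*Y^4 + (-2)*β*E^2*X^2*Y^2 + (2)*β*E^2*X^4 + (2)*β*E^3*X*Y^2 + (2)*β*E^3*X^3 + (-3)*β*E^4*Y^2 + (-1)*β*E^4*X^2 + (-1)*β*E^5*X + (2)*β*ν*Y^5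 + (4)*β*ν*X^2*Y^3 + (2)*β*ν*X^4*Y + (-4)*β*ν*E*X*Y^3 + (-4)*β*ν*E*X^3*Y + (4)*β*ν*E^3*X*Y + (-2)*β*ν*E^4*Y + (1)*β^2*X*Y^4 + (2)*β^2*X^3*Y^2 + (1)*β^2*X^5 + (1)*β^2*E*Y^4 + (1)*β^2*E*X^2*Y^2 + (-2)*β^2*E^2*X^3 + (1)*β^2*E^3*Y^2 + (1)*β^2*E^4*X) * hcirc
  refine ⟨hcy, ?_, mul_right_cancel₀ (pow_ne_zero 2 hd) hc2⟩
  intro h0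
  have h1 : (((E-X)^2+Y^2) - (β*(E+X)+2*ν*Y-2*E*X)) = 0 := by
    have h2 := hYy
    rw [h0, zero_mul] at h2
    rcases mul_eq_zero.mp h2.symm with h | h
    · exact h
    · exact absurd h hY
  have h2 : Xy * ((E-X)^2+Y^2) = E * ((E-X)^2+Y^2) := by
    linear_combination hXy + (-(E-X))*h1
  have h3 : Xy = E := mul_right_cancel₀ hd h2
  rw [h0, h3] at hcy
  have h4 : E*(E-β) = 0 := by linear_combination hcy
  rcases mul_eq_zero.mp h4 with h | h
  · exact hE0 h
  · exact hEβ (by linarith)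

private lemma mu_inj (β ν X Y X' Y' : ℝ) (hβ : β ≠ 0)
    (h1 : X^2+Y^2 = β*X+2*ν*Y) (h2 : X'^2+Y'^2 = β*X'+2*ν*Y')
    (hY : Y ≠ 0) (hY' : Y' ≠ 0)
    (hμ : (X^2+Y^2)*Y' = (X'^2+Y'^2)*Y) : X = X' ∧ Y = Y' := by
  have hg : β*(X*Y') = β*(X'*Y) := by linear_combination hμ - Y'*h1 + Y*h2
  have hg' : X*Y' = X'*Y := mul_left_cancel₀ hβ hg
  have h5 : Y*((X'^2+Y'^2)*(Y-Y')) = 0 := by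
    linear_combination Y'^2*h1 - Y*Y'*h2 - (X*Y'+X'*Y-β*Y')*hg'
  have hA' : (X'^2+Y'^2) ≠ 0 := sq_add_sq_ne_zero hY'
  have h6 : Y - Y' = 0 := by
    rcases mul_eq_zero.mp h5 with h | h
    · exact absurd h hY
    · rcases mul_eq_zero.mp h with h | h
      · exact absurd h hA'
      · exact h
  have hYe : Y = Y' := by linarith
  refine ⟨?_, hYe⟩
  exact mul_right_cancel₀ hY' (by rw [hg', hYe])

private lemma ratio_iff (M P Q R S β A0 Y0 A1 Y1 A1' Y1' A2 Y2 A2' Y2' : ℝ)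
    (hA0 : A0 ≠ 0) (hA1 : A1 ≠ 0) (hA1' : A1' ≠ 0) (hA2 : A2 ≠ 0)
    (hY2 : Y2 ≠ 0) (hY2' : Y2' ≠ 0)
    (hP : P ≠ 0) (hQ : Q ≠ 0) (hR : R ≠ 0) (hS : S ≠ 0)
    (hPβ : β - P ≠ 0) (hQβ : β - Q ≠ 0) (hRβ : β - R ≠ 0) (hSβ : β - S ≠ 0)
    (r1 : A1*A0*(P-β) = M*P*(Y1*Y0)) (r2 : A2*A1*(Q-β) = M*Q*(Y2*Y1))
    (r3 : A1'*A0*(S-β) = M*S*(Y1'*Y0)) (r4 : A2'*A1'*(R-β) = M*R*(Y2'*Y1')) :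
    (A2*Y2' = A2'*Y2 ↔ P*R*((β-Q)*(β-S)) = Q*S*((β-P)*(β-R))) := by
  have E1 : (A2*A1*(Q-β))*(A1'*A0*(S-β)) = (M*Q*(Y2*Y1))*(M*S*(Y1'*Y0)) := by rw [r2, r3]
  have E2 : (A1*A0*(P-β))*(A2'*A1'*(R-β)) = (M*P*(Y1*Y0))*(M*R*(Y2'*Y1')) := by rw [r1, r4]
  have hC : A1*A1'*A0 ≠ 0 := mul_ne_zero (mul_ne_zero hA1 hA1') hA0
  have hdag : (A2*Y2'*(P*R*((β-Q)*(β-S)))) * (A1*A1'*A0)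
      = (A2'*Y2*(Q*S*((β-P)*(β-R)))) * (A1*A1'*A0) := by
    linear_combination (Y2'*(P*R))*E1 - (Y2*(Q*S))*E2
  have hdag' : A2*Y2'*(P*R*((β-Q)*(β-S))) = A2'*Y2*(Q*S*((β-P)*(β-R))) :=
    mul_right_cancel₀ hC hdag
  have hκ1 : P*R*((β-Q)*(β-S)) ≠ 0 := mul_ne_zero (mul_ne_zero hP hR) (mul_ne_zero hQβ hSβ)
  constructor
  · intro h
    apply mul_left_cancel₀ (mul_ne_zero hA2 hY2')
    calc (A2*Y2')*(P*R*((β-Q)*(β-S))) = A2'*Y2*(Q*S*((β-P)*(β-R))) := hdag'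
      _ = (A2*Y2')*(Q*S*((β-P)*(β-R))) := by rw [← h]
  · intro h
    apply mul_right_cancel₀ hκ1
    calc A2*Y2'*(P*R*((β-Q)*(β-S))) = A2'*Y2*(Q*S*((β-P)*(β-R))) := hdag'
      _ = A2'*Y2*(P*R*((β-Q)*(β-S))) := by rw [h]

private lemma chordMap_eq (o : E2) (ρ : ℝ) (hρ : 0 < ρ) (e : E2) (I : E2 → E2)
    (h : ChordMap o ρ e I) (x : E2) (hx : x ∈ sphere o ρ) (he : e ∉ sphere o ρ) :
    I x = x + (-(2*⟪x-o, e-x⟫)/⟪e-x, e-x⟫) • (e-x) := by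
  have hex : e - x ≠ 0 := sub_ne_zero.mpr (fun h' => he (h' ▸ hx))
  have hd : (⟪e-x, e-x⟫ : ℝ) ≠ 0 := fun h' => hex (inner_self_eq_zero.mp h')
  set d : ℝ := ⟪e-x, e-x⟫ with hdd
  set t0 : ℝ := -(2*⟪x-o, e-x⟫)/d with ht0
  have sphere_iff : ∀ z : E2, (z ∈ sphere o ρ ↔ ⟪z-o, z-o⟫ = ρ^2) := by
    intro z
    rw [mem_sphere_iff_norm, real_inner_self_eq_norm_sq]
    constructor
    · intro hh; rw [hh]
    · intro hh; nlinarith [norm_nonneg (z-o)]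
  have expand : ∀ t : ℝ, (⟪x + t•(e-x) - o, x + t•(e-x) - o⟫ : ℝ)
      = ρ^2 + t*(t*d + 2*⟪x-o,e-x⟫) := by
    intro t
    have h1 : x + t•(e-x) - o = (x-o) + t•(e-x) := add_sub_right_comm x (t•(e-x)) o
    rw [h1, real_inner_add_add_self, real_inner_smul_right, real_inner_smul_left,
      real_inner_smul_right, (sphere_iff x).mp hx]
    rw [hdd]
    ring
  have htd : t0 * d = -(2*⟪x-o,e-x⟫) := by
    rw [ht0]; field_simp
  have hzC : x + t0 • (e-x) ∈ sphere o ρ := by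
    rw [sphere_iff, expand]
    linear_combination t0 * htd
  have hzL : x + t0 • (e-x) ∈ affineSpan ℝ ({x, e} : Set E2) := by
    have h1 := smul_vsub_vadd_mem_affineSpan_pair (k := ℝ) t0 x e
    simpa [vsub_eq_sub, vadd_eq_add, add_comm] using h1
  obtain ⟨hIS, hIL, huniq⟩ := h x hx
  have hIL' : ∃ t' : ℝ, I x = x + t' • (e-x) := by
    have h2 : (I x - x) +ᵥ x ∈ affineSpan ℝ ({x, e} : Set E2) := by
      simpa [vadd_eq_add, sub_add_cancel] using hIL
    obtain ⟨t', ht'⟩ := vadd_left_mem_affineSpan_pair.mp h2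
    refine ⟨t', ?_⟩
    have h3 : t' • (e - x) = I x - x := by simpa [vsub_eq_sub] using ht'
    rw [h3]; abel
  obtain ⟨t', hIx⟩ := hIL'
  have ht'eq : t' = 0 ∨ t' = t0 := by
    have h4 := (sphere_iff _).mp hIS
    rw [hIx, expand] at h4
    have h5 : t'*(t'*d + 2*⟪x-o,e-x⟫) = 0 := by linarith
    rcases mul_eq_zero.mp h5 with h6 | h6
    · exact Or.inl h6
    · right
      rw [ht0]
      rw [eq_div_iff hd]
      linarith
  rcases huniq _ hzC hzL with hz | hz
  · have h5 : t0 • (e-x) = 0 := by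
      have h6 := hz
      rwa [add_eq_left] at h6
    have h6 : t0 = 0 := by
      rcases smul_eq_zero.mp h5 with h7 | h7
      · exact h7
      · exact absurd h7 hex
    rcases ht'eq with h7 | h7
    · rw [hIx, h7, h6]
    · rw [hIx, h7]
  · exact hz.symm

set_option maxHeartbeats 2000000 in
/-- For points `p, q, r, s` (not on the circle) on the line through `a, b ∈ C`, the
cross-ratio condition `cr(a,b;p,q) = cr(a,b;s,r)` holds if and only if
`I_q ∘ I_p = I_r ∘ I_s` as maps of the circle. -/
theorem crossRatio_condition_iff_equal_compositions
    (o : E2) (ρ : ℝ) (hρ : 0 < ρ)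
    (a b : E2) (hab : a ≠ b)
    (haC : a ∈ sphere o ρ) (hbC : b ∈ sphere o ρ)
    (p q r s : E2)
    (hpl : p ∈ affineSpan ℝ ({a, b} : Set E2))
    (hql : q ∈ affineSpan ℝ ({a, b} : Set E2))
    (hrl : r ∈ affineSpan ℝ ({a, b} : Set E2))
    (hsl : s ∈ affineSpan ℝ ({a, b} : Set E2))
    (hpC : p ∉ sphere o ρ) (hqC : q ∉ sphere o ρ)
    (hrC : r ∉ sphere o ρ) (hsC : s ∉ sphere o ρ)
    -- a parametrization of the line through `a` and `b`
    (o₀ v : E2) (hv : v ≠ 0)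
    (ta tb tp tq tr ts : ℝ)
    (hta : a = o₀ + ta • v) (htb : b = o₀ + tb • v)
    (htp : p = o₀ + tp • v) (htq : q = o₀ + tq • v)
    (htr : r = o₀ + tr • v) (hts : s = o₀ + ts • v)
    (Ip Iq Ir Is : E2 → E2)
    (hIp : ChordMap o ρ p Ip) (hIq : ChordMap o ρ q Iq)
    (hIr : ChordMap o ρ r Ir) (hIs : ChordMap o ρ s Is) :
    crossRatio ta tb tp tq = crossRatio ta tb ts tr ↔
      ∀ x ∈ sphere o ρ, Iq (Ip x) = Ir (Is x) := by
  -- ### Setting up an orthonormal frame adapted to the line through `a` and `b`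
  have hune : b - a ≠ 0 := sub_ne_zero.mpr (Ne.symm hab)
  set β : ℝ := ‖b - a‖ with hβdef
  have hβpos : 0 < β := norm_pos_iff.mpr hune
  have hβ : β ≠ 0 := ne_of_gt hβpos
  set e1 : E2 := β⁻¹ • (b - a) with he1
  have he1u : b - a = β • e1 := by rw [he1, smul_inv_smul₀ hβ]
  have hcd : (e1 0)^2 + (e1 1)^2 = 1 := by
    have h1 : ‖e1‖ = 1 := by
      rw [he1, norm_smul, Real.norm_eq_abs, abs_inv, abs_of_pos hβpos, ← hβdef]
      field_simp
    have h2 : (⟪e1, e1⟫ : ℝ) = 1 := by rw [real_inner_self_eq_norm_sq, h1]; norm_num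
    rw [inner_coords] at h2
    linear_combination h2
  set e2 : E2 := (WithLp.equiv 2 _).symm ![-(e1 1), e1 0] with he2
  have he20 : e2 0 = -(e1 1) := rfl
  have he21 : e2 1 = e1 0 := rfl
  have ip11 : (⟪e1, e1⟫ : ℝ) = 1 := by rw [inner_coords]; linear_combination hcd
  have ip22 : (⟪e2, e2⟫ : ℝ) = 1 := by rw [inner_coords, he20, he21]; linear_combination hcd
  have ip12 : (⟪e1, e2⟫ : ℝ) = 0 := by rw [inner_coords, he20, he21]; ring
  have ip21 : (⟪e2, e1⟫ : ℝ) = 0 := by rw [real_inner_comm, ip12]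
  have par : ∀ w z : E2, (⟪w, z⟫ : ℝ) = ⟪w, e1⟫ * ⟪z, e1⟫ + ⟪w, e2⟫ * ⟪z, e2⟫ := by
    intro w z
    rw [inner_coords w z, inner_coords w e1, inner_coords z e1, inner_coords w e2,
      inner_coords z e2, he20, he21]
    linear_combination (-(w 0 * z 0 + w 1 * z 1)) * hcd
  -- ### Coordinates
  set X : E2 → ℝ := fun z => ⟪z - a, e1⟫ with hXdef
  set Y : E2 → ℝ := fun z => ⟪z - a, e2⟫ with hYdef
  have e1l : ∀ z w : E2, (⟪z - w, e1⟫ : ℝ) = X z - X w := by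
    intro z w
    simp only [hXdef]
    rw [← inner_sub_left]
    congr 1
    abel
  have e2l : ∀ z w : E2, (⟪z - w, e2⟫ : ℝ) = Y z - Y w := by
    intro z w
    simp only [hYdef]
    rw [← inner_sub_left]
    congr 1
    abel
  have inner_c : ∀ z w z' w' : E2, (⟪z - w, z' - w'⟫ : ℝ)
      = (X z - X w)*(X z' - X w') + (Y z - Y w)*(Y z' - Y w') := by
    intro z w z' w'
    rw [par (z-w) (z'-w'), e1l, e2l, e1l, e2l]
  have pt_ext : ∀ z w : E2, X z = X w → Y z = Y w → z = w := by
    intro z w h1 h2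
    have h3 : (⟪z-w, z-w⟫ : ℝ) = 0 := by rw [inner_c, h1, h2]; ring
    exact sub_eq_zero.mp (inner_self_eq_zero.mp h3)
  have sphere_c : ∀ z : E2, (z ∈ sphere o ρ ↔ (X z - X o)^2 + (Y z - Y o)^2 = ρ^2) := by
    intro z
    rw [mem_sphere_iff_norm]
    have h2 : ‖z - o‖^2 = (X z - X o)^2 + (Y z - Y o)^2 := by
      rw [← real_inner_self_eq_norm_sq, inner_c]; ring
    constructor
    · intro h; rw [← h2, h]
    · intro h
      have h3 : ‖z-o‖^2 = ρ^2 := by rw [h2, h]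
      nlinarith [norm_nonneg (z-o)]
  have hXa : X a = 0 := by simp [hXdef]
  have hYa : Y a = 0 := by simp [hYdef]
  have hXb : X b = β := by
    simp only [hXdef]
    rw [he1u, real_inner_smul_left, ip11, mul_one]
  have hYb : Y b = 0 := by
    simp only [hYdef]
    rw [he1u, real_inner_smul_left, ip12, mul_zero]
  -- coordinates of points on the line
  have htab : tb - ta ≠ 0 := by
    intro h
    exact hab (by rw [hta, htb, show tb = ta by linarith])
  have hXline : ∀ (z : E2) (t : ℝ), z = o₀ + t • v → X z = (t - ta) * ⟪v, e1⟫ := by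
    intro z t hz
    simp only [hXdef]
    have h : z - a = (t - ta) • v := by rw [hz, hta, sub_smul]; abel
    rw [h, real_inner_smul_left]
  have hYline : ∀ (z : E2) (t : ℝ), z = o₀ + t • v → Y z = (t - ta) * ⟪v, e2⟫ := by
    intro z t hz
    simp only [hYdef]
    have h : z - a = (t - ta) • v := by rw [hz, hta, sub_smul]; abel
    rw [h, real_inner_smul_left]
  have hwv : (⟪v, e2⟫ : ℝ) = 0 := by
    have h0 := hYline b tb htb
    rw [hYb] at h0
    rcases mul_eq_zero.mp h0.symm with h | h
    · exact absurd h htab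
    · exact h
  have hβeq : β = (tb - ta) * ⟪v, e1⟫ := by rw [← hXb]; exact hXline b tb htb
  have hcvne : (⟪v, e1⟫ : ℝ) ≠ 0 := by
    intro h
    rw [h, mul_zero] at hβeq
    exact hβ hβeq
  have hYp : Y p = 0 := by rw [hYline p tp htp, hwv, mul_zero]
  have hYq : Y q = 0 := by rw [hYline q tq htq, hwv, mul_zero]
  have hYr : Y r = 0 := by rw [hYline r tr htr, hwv, mul_zero]
  have hYs : Y s = 0 := by rw [hYline s ts hts, hwv, mul_zero]
  -- coordinates of the center
  set ν : ℝ := Y o with hν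
  have hXo : X o = β/2 := by
    have h1 := (sphere_c a).mp haC
    have h2 := (sphere_c b).mp hbC
    rw [hXa, hYa] at h1
    rw [hXb, hYb] at h2
    have h3 : β*(β - 2*(X o)) = 0 := by linear_combination h2 - h1
    rcases mul_eq_zero.mp h3 with h | h
    · exact absurd h hβ
    · linarith
  have hrad : (β/2)^2 + ν^2 = ρ^2 := by
    have h1 := (sphere_c a).mp haC
    rw [hXa, hYa, hXo] at h1
    linear_combination h1
  have circ_c : ∀ z : E2, (z ∈ sphere o ρ ↔ (X z)^2 + (Y z)^2 = β*(X z) + 2*ν*(Y z)) := by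
    intro z
    rw [sphere_c z, hXo]
    constructor
    · intro h; linear_combination h - hrad
    · intro h; linear_combination h + hrad
  -- the four chord points are off the circle, in coordinates
  have offcirc : ∀ z : E2, z ∉ sphere o ρ → Y z = 0 → X z ≠ 0 ∧ X z ≠ β := by
    intro z hz hYz
    constructor
    · intro h
      exact hz ((circ_c z).mpr (by rw [h, hYz]; ring))
    · intro h
      exact hz ((circ_c z).mpr (by rw [h, hYz]; ring))
  obtain ⟨hp0, hpβ⟩ := offcirc p hpC hYp
  obtain ⟨hq0, hqβ⟩ := offcirc q hqC hYq
  obtain ⟨hr0, hrβ⟩ := offcirc r hrC hYr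
  obtain ⟨hs0, hsβ⟩ := offcirc s hsC hYs
  -- ### Coordinates of the chord map
  have coordI : ∀ (e z : E2) (t : ℝ),
      X (z + t•(e-z)) = X z + t*(X e - X z) ∧ Y (z + t•(e-z)) = Y z + t*(Y e - Y z) := by
    intro e z t
    have h2 : (⟪e - z, e1⟫ : ℝ) = X e - X z := e1l e z
    have h3 : (⟪e - z, e2⟫ : ℝ) = Y e - Y z := e2l e z
    constructor
    · show (⟪z + t•(e-z) - a, e1⟫ : ℝ) = _
      rw [add_sub_right_comm, inner_add_left, real_inner_smul_left, h2]
    · show (⟪z + t•(e-z) - a, e2⟫ : ℝ) = _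
      rw [add_sub_right_comm, inner_add_left, real_inner_smul_left, h3]
  -- one chord-map step, in coordinates
  have step : ∀ (e : E2) (Ie : E2 → E2), ChordMap o ρ e Ie → e ∉ sphere o ρ →
      Y e = 0 → X e ≠ 0 → X e ≠ β →
      ∀ x, x ∈ sphere o ρ → Y x ≠ 0 →
      (Ie x ∈ sphere o ρ) ∧ Y (Ie x) ≠ 0 ∧
      ((X (Ie x))^2+(Y (Ie x))^2)*((X x)^2+(Y x)^2)*(X e - β)
        = (β^2+4*ν^2)*(X e)*((Y (Ie x))*(Y x)) := by
    intro e Ie hIe heC hYe hXe0 hXeβ x hx hYx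
    have hxcirc := (circ_c x).mp hx
    have hfor := chordMap_eq o ρ hρ e Ie hIe x hx heC
    have hdc : (⟪e - x, e - x⟫ : ℝ) = (X e - X x)^2 + (Y x)^2 := by
      rw [inner_c, hYe]; ring
    have hdne : ((X e - X x)^2 + (Y x)^2) ≠ 0 := sq_add_sq_ne_zero hYx
    have hdne' : (⟪e - x, e - x⟫ : ℝ) ≠ 0 := by rw [hdc]; exact hdne
    have hip : (⟪x-o, e-x⟫ : ℝ) = (X x - β/2)*(X e - X x) + (Y x - ν)*(0 - Y x) := by
      rw [inner_c, hXo, ← hν, hYe]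
    have htd : (-(2*⟪x-o, e-x⟫)/⟪e-x, e-x⟫) * ⟪e-x, e-x⟫ = -(2*⟪x-o,e-x⟫) := by
      exact div_mul_cancel₀ _ hdne'
    have hXI : X (Ie x) = X x + (-(2*⟪x-o, e-x⟫)/⟪e-x, e-x⟫)*(X e - X x) := by
      rw [hfor]; exact (coordI e x _).1
    have hYI : Y (Ie x) = Y x + (-(2*⟪x-o, e-x⟫)/⟪e-x, e-x⟫)*(0 - Y x) := by
      rw [hfor, (coordI e x _).2, hYe]
    have hXy : (X (Ie x)) * ((X e - X x)^2+(Y x)^2) =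
        (X x)*((X e - X x)^2+(Y x)^2)
          + (β*(X e + X x)+2*ν*(Y x)-2*(X e)*(X x))*(X e - X x) := by
      have h2 : (X (Ie x)) * (⟪e-x, e-x⟫ : ℝ) =
          (X x)*(⟪e-x, e-x⟫ : ℝ) + (-(2*⟪x-o,e-x⟫))*(X e - X x) := by
        rw [hXI]; linear_combination (X e - X x) * htd
      rw [hdc, hip] at h2
      linear_combination h2 + 2*(X e - X x)*hxcirc
    have hYy : (Y (Ie x)) * ((X e - X x)^2+(Y x)^2) =
        (((X e - X x)^2+(Y x)^2) - (β*(X e + X x)+2*ν*(Y x)-2*(X e)*(X x)))*(Y x) := by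
      have h2 : (Y (Ie x)) * (⟪e-x, e-x⟫ : ℝ) =
          (Y x)*(⟪e-x, e-x⟫ : ℝ) + (-(2*⟪x-o,e-x⟫))*(0 - Y x) := by
        rw [hYI]; linear_combination (0 - Y x) * htd
      rw [hdc, hip] at h2
      linear_combination h2 - 2*(Y x)*hxcirc
    obtain ⟨hycirc, hYyne, hrel⟩ := key_step β ν (X e) (X x) (Y x) (X (Ie x)) (Y (Ie x))
      hxcirc hYx hXe0 hXeβ hXy hYy
    exact ⟨(hIe x hx).1, hYyne, by linear_combination hrel⟩
  -- chord maps swap `a` and `b`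
  have stepab : ∀ (e : E2) (Ie : E2 → E2), ChordMap o ρ e Ie → e ∉ sphere o ρ →
      Y e = 0 → X e ≠ 0 → X e ≠ β → Ie a = b ∧ Ie b = a := by
    intro e Ie hIe heC hYe hXe0 hXeβ
    constructor
    · have hfor := chordMap_eq o ρ hρ e Ie hIe a haC heC
      have hda : (⟪e - a, e - a⟫ : ℝ) = (X e)^2 := by
        rw [inner_c, hXa, hYa, hYe]; ring
      have hipa : (⟪a-o, e-a⟫ : ℝ) = (0-β/2)*(X e - 0) := by
        rw [inner_c, hXa, hYa, hXo, ← hν, hYe]; ring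
      apply pt_ext
      · rw [hfor, (coordI e a _).1, hXa, hXb, hipa, hda]
        field_simp
        ring
      · rw [hfor, (coordI e a _).2, hYa, hYb, hYe]
        ring
    · have hfor := chordMap_eq o ρ hρ e Ie hIe b hbC heC
      have hdb : (⟪e - b, e - b⟫ : ℝ) = (X e - β)^2 := by
        rw [inner_c, hXb, hYb, hYe]; ring
      have hipb : (⟪b-o, e-b⟫ : ℝ) = (β-β/2)*(X e - β) := by
        rw [inner_c, hXb, hYb, hXo, ← hν, hYe]; ring
      have hXeβ' : X e - β ≠ 0 := sub_ne_zero.mpr hXeβ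
      apply pt_ext
      · rw [hfor, (coordI e b _).1, hXa, hXb, hipb, hdb]
        field_simp
        ring
      · rw [hfor, (coordI e b _).2, hYa, hYb, hYe]
        ring
  -- ### The cross-ratio condition in coordinates
  have hcr : (crossRatio ta tb tp tq = crossRatio ta tb ts tr) ↔
      ((X p)*(X r)*((β - X q)*(β - X s)) = (X q)*(X s)*((β - X p)*(β - X r))) := by
    have cv := (⟪v, e1⟫ : ℝ)
    have ha0 : (⟪v, e1⟫ : ℝ)*(ta-ta) = 0 := by ring
    have hbb : (⟪v, e1⟫ : ℝ)*(tb-ta) = β := by rw [hβeq]; ring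
    have hpp : (⟪v, e1⟫ : ℝ)*(tp-ta) = X p := by rw [hXline p tp htp]; ring
    have hqq : (⟪v, e1⟫ : ℝ)*(tq-ta) = X q := by rw [hXline q tq htq]; ring
    have hrr : (⟪v, e1⟫ : ℝ)*(tr-ta) = X r := by rw [hXline r tr htr]; ring
    have hss : (⟪v, e1⟫ : ℝ)*(ts-ta) = X s := by rw [hXline s ts hts]; ring
    have h1 : crossRatio ta tb tp tq = crossRatio 0 β (X p) (X q) := by
      rw [← cr_affine (⟪v, e1⟫ : ℝ) ta ta tb tp tq hcvne, ha0, hbb, hpp, hqq]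
    have h2 : crossRatio ta tb ts tr = crossRatio 0 β (X s) (X r) := by
      rw [← cr_affine (⟪v, e1⟫ : ℝ) ta ta tb ts tr hcvne, ha0, hbb, hss, hrr]
    rw [h1, h2]
    unfold crossRatio
    have d1 : (β - X p)*(0 - X q) ≠ 0 :=
      mul_ne_zero (sub_ne_zero.mpr (fun h => hpβ h.symm)) (by simpa using neg_ne_zero.mpr hq0)
    have d2 : (β - X s)*(0 - X r) ≠ 0 :=
      mul_ne_zero (sub_ne_zero.mpr (fun h => hsβ h.symm)) (by simpa using neg_ne_zero.mpr hr0)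
    rw [div_mul_div_comm, div_mul_div_comm, div_eq_div_iff d1 d2]
    constructor
    · intro h; linear_combination h
    · intro h; linear_combination h
  -- ### The central pointwise claim
  have central : ∀ x, x ∈ sphere o ρ → Y x ≠ 0 →
      (Iq (Ip x) = Ir (Is x) ↔
        (X p)*(X r)*((β - X q)*(β - X s)) = (X q)*(X s)*((β - X p)*(β - X r))) := by
    intro x hx hYx
    obtain ⟨hy1C, hY1, rel1⟩ := step p Ip hIp hpC hYp hp0 hpβ x hx hYx
    obtain ⟨hy2C, hY2, rel2⟩ := step q Iq hIq hqC hYq hq0 hqβ (Ip x) hy1C hY1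
    obtain ⟨hz1C, hY1', rel3⟩ := step s Is hIs hsC hYs hs0 hsβ x hx hYx
    obtain ⟨hz2C, hY2', rel4⟩ := step r Ir hIr hrC hYr hr0 hrβ (Is x) hz1C hY1'
    have hA0 : ((X x)^2+(Y x)^2) ≠ 0 := sq_add_sq_ne_zero hYx
    have hA1 : ((X (Ip x))^2+(Y (Ip x))^2) ≠ 0 := sq_add_sq_ne_zero hY1
    have hA1' : ((X (Is x))^2+(Y (Is x))^2) ≠ 0 := sq_add_sq_ne_zero hY1'
    have hA2 : ((X (Iq (Ip x)))^2+(Y (Iq (Ip x)))^2) ≠ 0 := sq_add_sq_ne_zero hY2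
    have hiff := ratio_iff (β^2+4*ν^2) (X p) (X q) (X r) (X s) β
      ((X x)^2+(Y x)^2) (Y x)
      ((X (Ip x))^2+(Y (Ip x))^2) (Y (Ip x))
      ((X (Is x))^2+(Y (Is x))^2) (Y (Is x))
      ((X (Iq (Ip x)))^2+(Y (Iq (Ip x)))^2) (Y (Iq (Ip x)))
      ((X (Ir (Is x)))^2+(Y (Ir (Is x)))^2) (Y (Ir (Is x)))
      hA0 hA1 hA1' hA2 hY2 hY2'
      hp0 hq0 hr0 hs0
      (sub_ne_zero.mpr (fun h => hpβ h.symm)) (sub_ne_zero.mpr (fun h => hqβ h.symm))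
      (sub_ne_zero.mpr (fun h => hrβ h.symm)) (sub_ne_zero.mpr (fun h => hsβ h.symm))
      (by linear_combination rel1) (by linear_combination rel2)
      (by linear_combination rel3) (by linear_combination rel4)
    constructor
    · intro h
      apply hiff.mp
      rw [h]
    · intro hstar
      have hmu := hiff.mpr hstar
      obtain ⟨hXe, hYe⟩ := mu_inj β ν (X (Iq (Ip x))) (Y (Iq (Ip x)))
        (X (Ir (Is x))) (Y (Ir (Is x))) hβ
        ((circ_c _).mp hy2C) ((circ_c _).mp hz2C) hY2 hY2' hmu
      exact pt_ext _ _ hXe hYe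
  -- ### Conclusion
  rw [hcr]
  constructor
  · intro hstar x hx
    by_cases hYx : Y x = 0
    · -- `x` is `a` or `b`
      have hx' := (circ_c x).mp hx
      rw [hYx] at hx'
      have h4 : (X x)*(X x - β) = 0 := by linear_combination hx'
      obtain ⟨hpa, hpb⟩ := stepab p Ip hIp hpC hYp hp0 hpβ
      obtain ⟨hqa, hqb⟩ := stepab q Iq hIq hqC hYq hq0 hqβ
      obtain ⟨hra, hrb⟩ := stepab r Ir hIr hrC hYr hr0 hrβ
      obtain ⟨hsa, hsb⟩ := stepab s Is hIs hsC hYs hs0 hsβ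
      rcases mul_eq_zero.mp h4 with h5 | h5
      · have hxa : x = a := pt_ext x a (by rw [h5, hXa]) (by rw [hYx, hYa])
        rw [hxa, hpa, hqb, hsa, hrb]
      · have hxb : x = b := pt_ext x b (by rw [hXb]; linarith) (by rw [hYx, hYb])
        rw [hxb, hpb, hqa, hsb, hra]
    · exact (central x hx hYx).mpr hstar
  · intro hmap
    -- evaluate at the top point of the circle
    have hn2 : ‖e2‖ = 1 := by
      have h1 : ‖e2‖^2 = 1 := by rw [← real_inner_self_eq_norm_sq, ip22]
      nlinarith [norm_nonneg e2]
    have hx₀C : (o + ρ • e2) ∈ sphere o ρ := by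
      rw [mem_sphere_iff_norm, add_sub_cancel_left, norm_smul, Real.norm_eq_abs,
        abs_of_pos hρ, hn2, mul_one]
    have hsub : o + ρ • e2 - a = (o - a) + ρ • e2 := add_sub_right_comm o (ρ • e2) a
    have hYx₀ : Y (o + ρ • e2) = ν + ρ := by
      simp only [hYdef]
      rw [hsub, inner_add_left, real_inner_smul_left, ip22, mul_one]
    have hYx₀ne : Y (o + ρ • e2) ≠ 0 := by
      rw [hYx₀]
      intro h
      have h2 : ν = -ρ := by linarith
      rw [h2] at hrad
      have h3 : β^2 = 0 := by nlinarith
      exact hβ (by nlinarith)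
    exact (central _ hx₀C hYx₀ne).mp (hmap _ hx₀C)
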